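/- Let (A, m, u) be a monoid in a monoidal category in which A has a left dual A*. Then the morphism h = (id_{A*} ⊗ m) ∘ (ε_A ⊗ id_A) : A → A* ⊗ A is a monoid homomorphism from (A, m, u) to the endomorphism monoid End(A) = (A* ⊗ A, id_{A*} ⊗ η_A ⊗ id_A, ε_A), and h is a split monomorphism with retraction u* ⊗ id_A. -/

import Mathlib

/-! Currying along `ε` sends `f : A ⊗ B ⟶ D` to a morphism `B ⟶ As ⊗ D`, and by the triangle
identity evaluating with `η` undoes it. The map `h` is the curried multiplication: associativity
of `m` makes it multiplicative for the composition of `End(A)`, the right unit law sends `u` to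
`ε`, and composing with `u* ⊗ id` evaluates `h` at `u`, which is `id` by the left unit law. -/

open CategoryTheory MonoidalCategory

namespace QAlg

variable {C : Type*} [Category C] [MonoidalCategory C]

/-- A dagger structure on a category. -/
structure Dagger (C : Type*) [Category C] where
  dag : ∀ {X Y : C}, (X ⟶ Y) → (Y ⟶ X)
  dag_dag : ∀ {X Y : C} (f : X ⟶ Y), dag (dag f) = f
  dag_id : ∀ X : C, dag (𝟙 X) = 𝟙 X
  dag_comp : ∀ {X Y Z : C} (f : X ⟶ Y) (g : Y ⟶ Z), dag (f ≫ g) = dag g ≫ dag f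

/-- A monoidal dagger category: the dagger is monoidal and the coherence
isomorphisms are unitary. -/
structure MonoidalDagger (C : Type*) [Category C] [MonoidalCategory C] extends Dagger C where
  dag_tensorHom : ∀ {W X Y Z : C} (f : W ⟶ X) (g : Y ⟶ Z), dag (f ⊗ₘ g) = dag f ⊗ₘ dag g
  dag_associator : ∀ X Y Z : C, dag (α_ X Y Z).hom = (α_ X Y Z).inv
  dag_leftUnitor : ∀ X : C, dag (λ_ X).hom = (λ_ X).inv
  dag_rightUnitor : ∀ X : C, dag (ρ_ X).hom = (ρ_ X).inv

/-- A morphism is unitary if its dagger is its inverse. -/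
def Dagger.IsUnitary (D : Dagger C) {X Y : C} (f : X ⟶ Y) : Prop :=
  f ≫ D.dag f = 𝟙 X ∧ D.dag f ≫ f = 𝟙 Y

/-- Assigned duals and left/right duality morphisms, compatible with the dagger
(the compatibility equations between the duality morphisms, but *not* yet the
condition `((-)^{*L})† = ((-)†)^{*L}`). -/
structure PreDuals (D : MonoidalDagger C) where
  star : C → C
  ε : ∀ A : C, 𝟙_ C ⟶ star A ⊗ A
  η : ∀ A : C, A ⊗ star A ⟶ 𝟙_ C
  εR : ∀ A : C, 𝟙_ C ⟶ A ⊗ star A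
  ηR : ∀ A : C, star A ⊗ A ⟶ 𝟙_ C
  triangle_left₁ : ∀ A : C,
    (ρ_ A).inv ≫ (A ◁ ε A) ≫ (α_ A (star A) A).inv ≫ (η A ▷ A) ≫ (λ_ A).hom = 𝟙 A
  triangle_left₂ : ∀ A : C,
    (λ_ (star A)).inv ≫ (ε A ▷ star A) ≫ (α_ (star A) A (star A)).hom ≫
      (star A ◁ η A) ≫ (ρ_ (star A)).hom = 𝟙 (star A)
  triangle_right₁ : ∀ A : C,
    (λ_ A).inv ≫ (εR A ▷ A) ≫ (α_ A (star A) A).hom ≫ (A ◁ ηR A) ≫ (ρ_ A).hom = 𝟙 A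
  triangle_right₂ : ∀ A : C,
    (ρ_ (star A)).inv ≫ (star A ◁ εR A) ≫ (α_ (star A) A (star A)).inv ≫
      (ηR A ▷ star A) ≫ (λ_ (star A)).hom = 𝟙 (star A)
  star_star : ∀ A : C, star (star A) = A
  star_tensor : ∀ A B : C, star (A ⊗ B) = star B ⊗ star A
  star_unit : star (𝟙_ C) = 𝟙_ C
  ε_eq_dag_ηR : ∀ A : C, ε A = D.dag (ηR A)
  η_eq_dag_εR : ∀ A : C, η A = D.dag (εR A)
  ε_eq_dag_η_star : ∀ A : C,
    ε A = D.dag (η (star A)) ≫ (star A ◁ eqToHom (star_star A))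
  ε_eq_εR_star : ∀ A : C,
    ε A = εR (star A) ≫ (star A ◁ eqToHom (star_star A))
  η_eq_dag_ε_star : ∀ A : C,
    η A = (eqToHom (star_star A).symm ▷ star A) ≫ D.dag (ε (star A))
  η_eq_ηR_star : ∀ A : C,
    η A = (eqToHom (star_star A).symm ▷ star A) ≫ ηR (star A)

variable {D : MonoidalDagger C}

/-- The left duality functor on morphisms. -/
def PreDuals.starL (P : PreDuals D) {A B : C} (f : A ⟶ B) : P.star B ⟶ P.star A :=
  (λ_ (P.star B)).inv ≫ (P.ε A ▷ P.star B) ≫ (α_ (P.star A) A (P.star B)).hom ≫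
    (P.star A ◁ (f ▷ P.star B)) ≫ (P.star A ◁ P.η B) ≫ (ρ_ (P.star A)).hom

/-- The right duality functor on morphisms. -/
def PreDuals.starR (P : PreDuals D) {A B : C} (f : A ⟶ B) : P.star B ⟶ P.star A :=
  (ρ_ (P.star B)).inv ≫ (P.star B ◁ P.εR A) ≫ (α_ (P.star B) A (P.star A)).inv ≫
    ((P.star B ◁ f) ▷ P.star A) ≫ (P.ηR B ▷ P.star A) ≫ (λ_ (P.star A)).hom

/-- A monoidal dagger category with duals: additionally `((-)^{*L})† = ((-)†)^{*L}`. -/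
structure Duals (D : MonoidalDagger C) extends PreDuals D where
  dag_starL : ∀ {A B : C} (f : A ⟶ B),
    D.dag (toPreDuals.starL f) = toPreDuals.starL (D.dag f)

/-- The conjugation functor `f ↦ f_* = (f^*)† = (f†)^*`. -/
def Duals.conj (P : Duals D) {A B : C} (f : A ⟶ B) : P.star A ⟶ P.star B :=
  D.dag (P.starL f)

/-- The abstract dimension of an object, `ε† ∘ ε`. -/
def Duals.dim (P : Duals D) (A : C) : 𝟙_ C ⟶ 𝟙_ C :=
  P.ε A ≫ D.dag (P.ε A)

/-- Monoid data on an object. -/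
structure MonoidOn (A : C) where
  m : A ⊗ A ⟶ A
  u : 𝟙_ C ⟶ A

/-- The monoid axioms. -/
def MonoidOn.IsMonoid {A : C} (M : MonoidOn A) : Prop :=
  ((M.u ▷ A) ≫ M.m = (λ_ A).hom) ∧ ((A ◁ M.u) ≫ M.m = (ρ_ A).hom) ∧
    ((M.m ▷ A) ≫ M.m = (α_ A A A).hom ≫ (A ◁ M.m) ≫ M.m)

/-- The dagger Frobenius condition: the adjoint comonoid satisfies the
Frobenius law with the monoid. -/
def MonoidOn.IsDagFrobenius {A : C} (M : MonoidOn A) (D : MonoidalDagger C) : Prop :=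
  ((D.dag M.m ▷ A) ≫ (α_ A A A).hom ≫ (A ◁ M.m) = M.m ≫ D.dag M.m) ∧
    ((A ◁ D.dag M.m) ≫ (α_ A A A).inv ≫ (M.m ▷ A) = M.m ≫ D.dag M.m)

/-- The canonical left involution of a dagger Frobenius monoid. -/
def Duals.sL (P : Duals D) {A : C} (M : MonoidOn A) : A ⟶ P.star A :=
  (ρ_ A).inv ≫ (A ◁ (P.ε (P.star A) ≫ (eqToHom (P.star_star A) ▷ P.star A))) ≫
    (α_ A A (P.star A)).inv ≫ ((M.m ≫ D.dag M.u) ▷ P.star A) ≫ (λ_ (P.star A)).hom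

/-- The canonical right involution of a dagger Frobenius monoid. -/
def Duals.sR (P : Duals D) {A : C} (M : MonoidOn A) : A ⟶ P.star A :=
  (λ_ A).inv ≫ (P.ε A ▷ A) ≫ (α_ (P.star A) A A).hom ≫
    (P.star A ◁ (M.m ≫ D.dag M.u)) ≫ (ρ_ (P.star A)).hom

/-- Multiplication of the conjugate monoid on `A*`. -/
def Duals.conjMul (P : Duals D) {A : C} (M : MonoidOn A) : P.star A ⊗ P.star A ⟶ P.star A :=
  eqToHom (P.star_tensor A A).symm ≫ P.conj M.m

/-- Unit of the conjugate monoid on `A*`. -/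
def Duals.conjUnit (P : Duals D) {A : C} (M : MonoidOn A) : 𝟙_ C ⟶ P.star A :=
  eqToHom P.star_unit.symm ≫ P.conj M.u

/-- `s : A ⟶ A*` makes the monoid `M` into an involution monoid: it is a monoid
homomorphism to the conjugate monoid and satisfies `s_* ∘ s = id` (via `A** = A`). -/
def Duals.IsInvolutionMonoid (P : Duals D) {A : C} (M : MonoidOn A) (s : A ⟶ P.star A) : Prop :=
  (M.m ≫ s = (s ⊗ₘ s) ≫ P.conjMul M) ∧ (M.u ≫ s = P.conjUnit M) ∧
    (s ≫ P.conj s ≫ eqToHom (P.star_star A) = 𝟙 A)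

/-- Monoid homomorphism property. -/
def IsMonoidHom {A B : C} (M : MonoidOn A) (N : MonoidOn B) (f : A ⟶ B) : Prop :=
  (M.m ≫ f = (f ⊗ₘ f) ≫ N.m) ∧ (M.u ≫ f = N.u)

/-- The endomorphism monoid `End(A)` on `A* ⊗ A`. -/
def Duals.endM (P : Duals D) (A : C) : MonoidOn (P.star A ⊗ A) where
  m := (α_ (P.star A) A (P.star A ⊗ A)).hom ≫ (P.star A ◁ (α_ A (P.star A) A).inv) ≫
    (P.star A ◁ (P.η A ▷ A)) ≫ (P.star A ◁ (λ_ A).hom)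
  u := P.ε A


section Currying

variable {A As : C} (ε : 𝟙_ C ⟶ As ⊗ A)

def dualCurry {B D : C} (f : A ⊗ B ⟶ D) : B ⟶ As ⊗ D :=
  (λ_ B).inv ≫ (ε ▷ B) ≫ (α_ As A B).hom ≫ (As ◁ f)

lemma comp_dualCurry {B B' D : C} (k : B' ⟶ B) (f : A ⊗ B ⟶ D) :
    k ≫ dualCurry ε f = dualCurry ε ((A ◁ k) ≫ f) := by
  simp only [dualCurry, MonoidalCategory.whiskerLeft_comp]
  rw [leftUnitor_inv_naturality_assoc, whisker_exchange_assoc,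
    associator_naturality_right_assoc]

lemma dualCurry_whiskerRight_comp {B D E F : C} (f : A ⊗ B ⟶ D) (g : D ⊗ E ⟶ F) :
    (dualCurry ε f ▷ E) ≫ (α_ As D E).hom ≫ (As ◁ g) =
      dualCurry ε ((α_ A B E).inv ≫ (f ▷ E) ≫ g) := by
  simp only [dualCurry, comp_whiskerRight, Category.assoc, MonoidalCategory.whiskerLeft_comp]
  rw [associator_naturality_middle_assoc]
  monoidal

lemma dualCurry_rightUnitor : dualCurry ε (ρ_ A).hom = ε := by
  simp only [dualCurry]
  monoidal

lemma whiskerLeft_dualCurry_comp_eval {η : A ⊗ As ⟶ 𝟙_ C}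
    (triangle : (ρ_ A).inv ≫ (A ◁ ε) ≫ (α_ A As A).inv ≫ (η ▷ A) ≫ (λ_ A).hom = 𝟙 A)
    {B D : C} (f : A ⊗ B ⟶ D) :
    (A ◁ dualCurry ε f) ≫ (α_ A As D).inv ≫ (η ▷ D) ≫ (λ_ D).hom = f :=
  calc _ = 𝟙 _ ⊗≫ A ◁ ε ▷ B ⊗≫ ((A ⊗ As) ◁ f ≫ η ▷ D) ⊗≫ 𝟙 _ := by
        simp only [dualCurry]
        monoidal
    _ = 𝟙 _ ⊗≫ ((ρ_ A).inv ≫ (A ◁ ε) ≫ (α_ A As A).inv ≫ (η ▷ A) ≫ (λ_ A).hom) ▷ B ⊗≫ f := by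
        rw [whisker_exchange]
        monoidal
    _ = f := by
        rw [triangle]
        monoidal

lemma dualCurry_comp_evalAt {η : A ⊗ As ⟶ 𝟙_ C}
    (triangle : (ρ_ A).inv ≫ (A ◁ ε) ≫ (α_ A As A).inv ≫ (η ▷ A) ≫ (λ_ A).hom = 𝟙 A)
    {B D : C} (x : 𝟙_ C ⟶ A) (f : A ⊗ B ⟶ D) :
    dualCurry ε f ≫ (((λ_ As).inv ≫ (x ▷ As) ≫ η) ▷ D) ≫ (λ_ D).hom =
      (λ_ B).inv ≫ (x ▷ B) ≫ f := by
  conv_rhs => rw [← whiskerLeft_dualCurry_comp_eval ε triangle f, ← whisker_exchange_assoc,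
    ← leftUnitor_inv_naturality_assoc]
  monoidal

lemma tensorHom_dualCurry_comp_endMul {η : A ⊗ As ⟶ 𝟙_ C}
    (triangle : (ρ_ A).inv ≫ (A ◁ ε) ≫ (α_ A As A).inv ≫ (η ▷ A) ≫ (λ_ A).hom = 𝟙 A)
    {X B D : C} (g : X ⟶ As ⊗ A) (f : A ⊗ B ⟶ D) :
    (g ⊗ₘ dualCurry ε f) ≫ (α_ As A (As ⊗ D)).hom ≫ (As ◁ (α_ A As D).inv) ≫
        (As ◁ (η ▷ D)) ≫ (As ◁ (λ_ D).hom) =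
      (g ▷ B) ≫ (α_ As A B).hom ≫ (As ◁ f) := by
  rw [MonoidalCategory.tensorHom_def, Category.assoc, associator_naturality_right_assoc]
  simp only [← MonoidalCategory.whiskerLeft_comp]
  rw [whiskerLeft_dualCurry_comp_eval ε triangle f]

end Currying

theorem stmt12 {C : Type*} [Category C] [MonoidalCategory C]
    (A As : C) (ε : 𝟙_ C ⟶ As ⊗ A) (η : A ⊗ As ⟶ 𝟙_ C)
    (t1 : (ρ_ A).inv ≫ (A ◁ ε) ≫ (α_ A As A).inv ≫ (η ▷ A) ≫ (λ_ A).hom = 𝟙 A)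
    (M : MonoidOn A) (hM : M.IsMonoid) :
    (M.m ≫ ((λ_ A).inv ≫ (ε ▷ A) ≫ (α_ As A A).hom ≫ (As ◁ M.m)) =
      (((λ_ A).inv ≫ (ε ▷ A) ≫ (α_ As A A).hom ≫ (As ◁ M.m)) ⊗ₘ
        ((λ_ A).inv ≫ (ε ▷ A) ≫ (α_ As A A).hom ≫ (As ◁ M.m))) ≫
        ((α_ As A (As ⊗ A)).hom ≫ (As ◁ (α_ A As A).inv) ≫ (As ◁ (η ▷ A)) ≫
          (As ◁ (λ_ A).hom))) ∧
    (M.u ≫ ((λ_ A).inv ≫ (ε ▷ A) ≫ (α_ As A A).hom ≫ (As ◁ M.m)) = ε) ∧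
    (((λ_ A).inv ≫ (ε ▷ A) ≫ (α_ As A A).hom ≫ (As ◁ M.m)) ≫
      ((((λ_ As).inv ≫ (M.u ▷ As) ≫ η) ▷ A) ≫ (λ_ A).hom) = 𝟙 A) := by
  obtain ⟨unit_left, unit_right, assoc⟩ := hM
  change M.m ≫ dualCurry ε M.m = (dualCurry ε M.m ⊗ₘ dualCurry ε M.m) ≫ _ ∧
    M.u ≫ dualCurry ε M.m = ε ∧ dualCurry ε M.m ≫ _ = 𝟙 A
  refine ⟨?_, ?_, ?_⟩
  · have assoc_inv : (A ◁ M.m) ≫ M.m = (α_ A A A).inv ≫ (M.m ▷ A) ≫ M.m := by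
      rw [assoc, Iso.inv_hom_id_assoc]
    rw [tensorHom_dualCurry_comp_endMul ε t1, dualCurry_whiskerRight_comp, comp_dualCurry,
      assoc_inv]
  · rw [comp_dualCurry, unit_right, dualCurry_rightUnitor]
  · rw [dualCurry_comp_evalAt ε t1, unit_left, Iso.inv_hom_id]

end QAlg
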